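/- arXiv:2506.23475 — 6 statements merged into one kernel-verified Lean document; each statement's English description precedes it below -/
import Mathlib

section
/- For any vectors v_1, ..., v_K in R^n, (1/K) ∑_{k=1}^K ⟨v_k, ∑_{l=1}^k v_l⟩ − ((K+1)/(2K²)) ‖∑_{k=1}^K v_k‖² = (1/(2K²)) ∑_{k=1}^K ∑_{l=1}^{k−1} ‖v_k − v_l‖². -/
/-!
With `D = ∑ ‖v k‖ ^ 2` and `S = ∑ v k`, the first sum on the left is `(‖S‖ ^ 2 + D) / 2`
(split the symmetric Gram sum `‖S‖ ^ 2` along the diagonal), and by Lagrange's identity the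
double sum on the right is `K * D - ‖S‖ ^ 2`; the identity is then arithmetic in `D`
and `‖S‖ ^ 2`.
-/

open Finset RealInnerProductSpace

namespace Finset

variable {ι M : Type*} [LinearOrder ι]

theorem sum_filter_le_eq_sum_filter_lt_add [AddCommMonoid M] {s : Finset ι} {i : ι}
    (hi : i ∈ s) (g : ι → M) :
    ∑ j ∈ s with j ≤ i, g j = ∑ j ∈ s with j < i, g j + g i := by
  have : {j ∈ s | j ≤ i} = insert i {j ∈ s | j < i} := by
    ext j; simp only [mem_filter, mem_insert]; grind
  rw [this, sum_insert (by simp), add_comm]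

theorem sum_sum_eq_sum_sum_le_add_sum_sum_lt [AddCommMonoid M] (s : Finset ι)
    {f : ι → ι → M} (hf : ∀ i j, f i j = f j i) :
    ∑ i ∈ s, ∑ j ∈ s, f i j =
      ∑ i ∈ s, ∑ j ∈ s with j ≤ i, f i j + ∑ i ∈ s, ∑ j ∈ s with j < i, f i j := by
  have upper : ∑ i ∈ s, ∑ j ∈ s with ¬ j ≤ i, f i j = ∑ i ∈ s, ∑ j ∈ s with j < i, f i j := by
    rw [sum_comm' (t' := s) (s' := fun j => {i ∈ s | i < j})]
    · exact sum_congr rfl fun j _ => sum_congr rfl fun i _ => hf i j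
    · intro i j; simp only [mem_filter, not_le]; tauto
  simp only [← upper, ← sum_add_distrib, sum_filter_add_sum_filter_not]

end Finset

section InnerProductSpace

variable {ι E : Type*} [LinearOrder ι] [NormedAddCommGroup E] [InnerProductSpace ℝ E]

theorem two_mul_sum_inner_sum_filter_le (s : Finset ι) (v : ι → E) :
    2 * ∑ i ∈ s, ⟪v i, ∑ j ∈ s with j ≤ i, v j⟫ = ‖∑ i ∈ s, v i‖ ^ 2 + ∑ i ∈ s, ‖v i‖ ^ 2 := by
  have hlt : ∑ i ∈ s, ∑ j ∈ s with j ≤ i, ⟪v i, v j⟫ =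
      ∑ i ∈ s, ∑ j ∈ s with j < i, ⟪v i, v j⟫ + ∑ i ∈ s, ‖v i‖ ^ 2 := by
    rw [← sum_add_distrib]
    refine sum_congr rfl fun i hi => ?_
    rw [sum_filter_le_eq_sum_filter_lt_add hi, real_inner_self_eq_norm_sq]
  have hsq : ‖∑ i ∈ s, v i‖ ^ 2 = ∑ i ∈ s, ∑ j ∈ s, ⟪v i, v j⟫ := by
    rw [← real_inner_self_eq_norm_sq, sum_inner]; simp only [inner_sum]
  rw [hsq, sum_sum_eq_sum_sum_le_add_sum_sum_lt s fun i j => real_inner_comm (v j) (v i)]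
  simp only [inner_sum]
  linarith

/-- Lagrange's identity in an inner product space. -/
theorem sum_sum_filter_lt_norm_sub_sq (s : Finset ι) (v : ι → E) :
    ∑ i ∈ s, ∑ j ∈ s with j < i, ‖v i - v j‖ ^ 2 =
      #s * ∑ i ∈ s, ‖v i‖ ^ 2 - ‖∑ i ∈ s, v i‖ ^ 2 := by
  have hle : ∑ i ∈ s, ∑ j ∈ s with j ≤ i, ‖v i - v j‖ ^ 2 =
      ∑ i ∈ s, ∑ j ∈ s with j < i, ‖v i - v j‖ ^ 2 :=
    sum_congr rfl fun i hi => by simp [sum_filter_le_eq_sum_filter_lt_add hi]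
  have hfull : ∑ i ∈ s, ∑ j ∈ s, ‖v i - v j‖ ^ 2 =
      2 * (#s * ∑ i ∈ s, ‖v i‖ ^ 2 - ‖∑ i ∈ s, v i‖ ^ 2) := by
    simp only [norm_sub_sq_real, sum_add_distrib, sum_sub_distrib, ← mul_sum, ← inner_sum,
      ← sum_inner, real_inner_self_eq_norm_sq, sum_const, nsmul_eq_mul]
    ring
  have hsplit := sum_sum_eq_sum_sum_le_add_sum_sum_lt s (f := fun i j => ‖v i - v j‖ ^ 2)
    fun i j => by rw [norm_sub_rev]
  linarith

end InnerProductSpace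

theorem inner_partial_sum_identity (n K : ℕ) (hK : 0 < K)
    (v : ℕ → EuclideanSpace ℝ (Fin n)) :
    (1 / (K : ℝ)) * ∑ k ∈ Icc 1 K, ⟪v k, (∑ l ∈ Icc 1 k, v l)⟫ -
        (((K : ℝ) + 1) / (2 * (K : ℝ) ^ 2)) * ‖∑ k ∈ Icc 1 K, v k‖ ^ 2 =
      (1 / (2 * (K : ℝ) ^ 2)) * ∑ k ∈ Icc 1 K, ∑ l ∈ Icc 1 (k - 1), ‖v k - v l‖ ^ 2 := by
  have partial_sums : ∑ k ∈ Icc 1 K, ⟪v k, (∑ l ∈ Icc 1 k, v l)⟫ =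
      ∑ k ∈ Icc 1 K, ⟪v k, ∑ l ∈ Icc 1 K with l ≤ k, v l⟫ := by
    refine sum_congr rfl fun k hk => ?_
    congr 2; ext l; simp only [mem_Icc, mem_filter] at hk ⊢; omega
  have differences : ∑ k ∈ Icc 1 K, ∑ l ∈ Icc 1 (k - 1), ‖v k - v l‖ ^ 2 =
      ∑ k ∈ Icc 1 K, ∑ l ∈ Icc 1 K with l < k, ‖v k - v l‖ ^ 2 := by
    refine sum_congr rfl fun k hk => ?_
    congr 1; ext l; simp only [mem_Icc, mem_filter] at hk ⊢; omega
  have hgram := two_mul_sum_inner_sum_filter_le (Icc 1 K) v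
  rw [partial_sums, differences, sum_sum_filter_lt_norm_sub_sq, Nat.card_Icc,
    Nat.add_sub_cancel]
  have hK' : (K : ℝ) ≠ 0 := by positivity
  field_simp
  linear_combination (K : ℝ) * hgram
end

section
/- Moreau identity: for a closed convex proper function f on R^n and any α > 0 and x ∈ R^n, prox_{αf}(x) + α prox_{α^{-1} f*}(x/α) = x. -/
/-!
If `p = prox_{αf}(x)`, the first-order optimality condition makes `u = α⁻¹ • (x - p)` a
subgradient of `f` at `p`. By the equality case of Fenchel–Young, `p` is then a subgradient of
`f*` at `u`, i.e. `α⁻¹ • x - u` is a subgradient of `α⁻¹ f*` at `u`. This is exactly the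
optimality condition for `u = prox_{α⁻¹ f*}(α⁻¹ • x)`, and the quadratic term makes that
minimizer unique, so `q = u` and `p + α • q = x`.
-/

open RealInnerProductSpace

noncomputable section

/-- A closed convex proper function, modeled as a real-valued function `f` on a
nonempty convex domain `D` with closed epigraph. -/
def IsCCP {n : ℕ} (D : Set (EuclideanSpace ℝ (Fin n)))
    (f : EuclideanSpace ℝ (Fin n) → ℝ) : Prop :=
  D.Nonempty ∧ ConvexOn ℝ D f ∧
    IsClosed {p : EuclideanSpace ℝ (Fin n) × ℝ | p.1 ∈ D ∧ f p.1 ≤ p.2}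

/-- `p` is the proximal point of `f` (with domain `D`) at `x`. -/
def IsProxOn {n : ℕ} (D : Set (EuclideanSpace ℝ (Fin n)))
    (f : EuclideanSpace ℝ (Fin n) → ℝ) (x p : EuclideanSpace ℝ (Fin n)) : Prop :=
  p ∈ D ∧ ∀ y ∈ D, f p + (1 / 2) * ‖p - x‖ ^ 2 ≤ f y + (1 / 2) * ‖y - x‖ ^ 2

/-- `(Dgs, gs)` is the Fenchel conjugate of `(Dg, g)`: `Dgs` is the set where
`sup_{x ∈ Dg} (⟨u,x⟩ − g(x))` is finite, and there `gs u` is that supremum. -/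
def IsConjugateOn {n : ℕ} (Dg : Set (EuclideanSpace ℝ (Fin n)))
    (g : EuclideanSpace ℝ (Fin n) → ℝ) (Dgs : Set (EuclideanSpace ℝ (Fin n)))
    (gs : EuclideanSpace ℝ (Fin n) → ℝ) : Prop :=
  ∀ u, (u ∈ Dgs ↔ BddAbove ((fun x => ⟪u, x⟫ - g x) '' Dg)) ∧
    (u ∈ Dgs → IsLUB ((fun x => ⟪u, x⟫ - g x) '' Dg) (gs u))

open Filter Topology

theorem le_of_forall_mem_Ioc_le_add_mul {a b c : ℝ} (h : ∀ t ∈ Set.Ioc (0 : ℝ) 1, a ≤ b + t * c) :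
    a ≤ b := by
  have hlim : Tendsto (fun t : ℝ => b + t * c) (𝓝[>] 0) (𝓝 b) := by
    have : Continuous (fun t : ℝ => b + t * c) := by fun_prop
    simpa using (this.tendsto 0).mono_left nhdsWithin_le_nhds
  exact ge_of_tendsto hlim (eventually_of_mem (Ioc_mem_nhdsGT one_pos) h)

section Subgradient

variable {E : Type*} [NormedAddCommGroup E] [InnerProductSpace ℝ E]

def IsSubgradientOn (D : Set E) (g : E → ℝ) (p s : E) : Prop :=
  ∀ y ∈ D, g p + ⟪s, y - p⟫ ≤ g y

variable {D : Set E} {g : E → ℝ} {p s x : E}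

theorem IsSubgradientOn.const_mul (hs : IsSubgradientOn D g p s) {c : ℝ} (hc : 0 ≤ c) :
    IsSubgradientOn D (fun y => c * g y) p (c • s) := by
  intro y hy
  have := mul_le_mul_of_nonneg_left (hs y hy) hc
  rw [real_inner_smul_left]
  linarith

theorem IsSubgradientOn.of_const_mul {c : ℝ} (hc : 0 < c)
    (hs : IsSubgradientOn D (fun y => c * g y) p s) : IsSubgradientOn D g p (c⁻¹ • s) := by
  simpa [inv_mul_cancel_left₀ hc.ne'] using hs.const_mul (inv_nonneg.mpr hc.le)

theorem ConvexOn.isSubgradientOn_of_isMinOn_add_half_sq (hg : ConvexOn ℝ D g) (hp : p ∈ D)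
    (hmin : IsMinOn (fun y => g y + 1 / 2 * ‖y - x‖ ^ 2) D p) :
    IsSubgradientOn D g p (x - p) := by
  intro y hy
  -- compare `p` with the points `(1 - t) • p + t • y`, divide by `t` and let `t → 0`
  refine le_of_forall_mem_Ioc_le_add_mul (c := ‖y - p‖ ^ 2 / 2) fun t ⟨ht0, ht1⟩ => ?_
  have hzD : (1 - t) • p + t • y ∈ D := hg.1 hp hy (by linarith) ht0.le (by ring)
  have hgz : g ((1 - t) • p + t • y) ≤ (1 - t) * g p + t * g y :=
    hg.2 hp hy (by linarith) ht0.le (by ring)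
  have hnorm : ‖(1 - t) • p + t • y - x‖ ^ 2
      = ‖p - x‖ ^ 2 + 2 * (t * ⟪p - x, y - p⟫) + t ^ 2 * ‖y - p‖ ^ 2 := by
    rw [show (1 - t) • p + t • y - x = (p - x) + t • (y - p) by module, norm_add_sq_real,
      real_inner_smul_right, norm_smul, mul_pow, Real.norm_eq_abs, sq_abs]
  have hz : g p + 1 / 2 * ‖p - x‖ ^ 2
      ≤ g ((1 - t) • p + t • y) + 1 / 2 * ‖(1 - t) • p + t • y - x‖ ^ 2 :=
    isMinOn_iff.mp hmin _ hzD
  rw [hnorm] at hz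
  have : t * (g p + ⟪x - p, y - p⟫) ≤ t * (g y + t * (‖y - p‖ ^ 2 / 2)) := by
    rw [← neg_sub p x, inner_neg_left]
    nlinarith
  exact le_of_mul_le_mul_left this ht0

theorem IsSubgradientOn.add_half_sq_le (hs : IsSubgradientOn D g p (x - p)) {y : E} (hy : y ∈ D) :
    g p + 1 / 2 * ‖p - x‖ ^ 2 + 1 / 2 * ‖y - p‖ ^ 2 ≤ g y + 1 / 2 * ‖y - x‖ ^ 2 := by
  have hnorm : ‖y - x‖ ^ 2 = ‖y - p‖ ^ 2 - 2 * ⟪x - p, y - p⟫ + ‖p - x‖ ^ 2 := by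
    rw [show y - x = (y - p) - (x - p) by abel, norm_sub_sq_real, ← neg_sub x p, norm_neg,
      real_inner_comm]
  have := hs y hy
  rw [hnorm]
  linarith

theorem IsSubgradientOn.eq_of_isMinOn_add_half_sq (hs : IsSubgradientOn D g p (x - p))
    (hp : p ∈ D) {q : E} (hq : q ∈ D) (hmin : IsMinOn (fun y => g y + 1 / 2 * ‖y - x‖ ^ 2) D q) :
    q = p := by
  have h₁ := hs.add_half_sq_le hq
  have h₂ : g q + 1 / 2 * ‖q - x‖ ^ 2 ≤ g p + 1 / 2 * ‖p - x‖ ^ 2 := hmin hp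
  have : ‖q - p‖ ^ 2 ≤ 0 := by linarith
  simpa [sub_eq_zero] using this

end Subgradient

section Conjugate

variable {n : ℕ} {Dg Dgs : Set (EuclideanSpace ℝ (Fin n))} {g gs : EuclideanSpace ℝ (Fin n) → ℝ}
  {p u y : EuclideanSpace ℝ (Fin n)}

theorem IsConjugateOn.inner_sub_le (h : IsConjugateOn Dg g Dgs gs) (hu : u ∈ Dgs) (hy : y ∈ Dg) :
    ⟪u, y⟫ - g y ≤ gs u :=
  ((h u).2 hu).1 ⟨y, hy, rfl⟩

theorem IsConjugateOn.mem_of_isSubgradientOn (h : IsConjugateOn Dg g Dgs gs)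
    (hs : IsSubgradientOn Dg g p u) : u ∈ Dgs := by
  refine (h u).1.mpr ⟨⟪u, p⟫ - g p, ?_⟩
  rintro _ ⟨y, hy, rfl⟩
  have := hs y hy
  rw [inner_sub_right] at this
  linarith

theorem IsConjugateOn.apply_eq_of_isSubgradientOn (h : IsConjugateOn Dg g Dgs gs) (hp : p ∈ Dg)
    (hs : IsSubgradientOn Dg g p u) : gs u = ⟪u, p⟫ - g p := by
  have hu := h.mem_of_isSubgradientOn hs
  refine le_antisymm (((h u).2 hu).2 ?_) (h.inner_sub_le hu hp)
  rintro _ ⟨y, hy, rfl⟩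
  have := hs y hy
  rw [inner_sub_right] at this
  linarith

theorem IsConjugateOn.isSubgradientOn (h : IsConjugateOn Dg g Dgs gs) (hp : p ∈ Dg)
    (hs : IsSubgradientOn Dg g p u) : IsSubgradientOn Dgs gs u p := by
  intro v hv
  have := h.inner_sub_le hv hp
  rw [h.apply_eq_of_isSubgradientOn hp hs, inner_sub_right, real_inner_comm v p,
    real_inner_comm u p]
  linarith

end Conjugate

theorem IsProxOn.isMinOn {n : ℕ} {D : Set (EuclideanSpace ℝ (Fin n))}
    {g : EuclideanSpace ℝ (Fin n) → ℝ} {x p : EuclideanSpace ℝ (Fin n)} (hp : IsProxOn D g x p) :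
    IsMinOn (fun y => g y + 1 / 2 * ‖y - x‖ ^ 2) D p :=
  isMinOn_iff.mpr hp.2

/-- Moreau identity: `prox_{αf}(x) + α prox_{α⁻¹ f*}(x/α) = x`. -/
theorem moreau_identity (n : ℕ) (α : ℝ) (hα : 0 < α)
    (Df Dfs : Set (EuclideanSpace ℝ (Fin n)))
    (f fs : EuclideanSpace ℝ (Fin n) → ℝ)
    (hf : IsCCP Df f) (hconj : IsConjugateOn Df f Dfs fs)
    (x p q : EuclideanSpace ℝ (Fin n))
    (hp : IsProxOn Df (fun y => α * f y) x p)
    (hq : IsProxOn Dfs (fun u => α⁻¹ * fs u) (α⁻¹ • x) q) :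
    p + α • q = x := by
  set u := α⁻¹ • (x - p)
  have hf_sub : IsSubgradientOn Df f p u :=
    ((hf.2.1.smul hα.le).isSubgradientOn_of_isMinOn_add_half_sq hp.1 hp.isMinOn).of_const_mul hα
  have hfs_sub : IsSubgradientOn Dfs (fun v => α⁻¹ * fs v) u (α⁻¹ • x - u) := by
    convert (hconj.isSubgradientOn hp.1 hf_sub).const_mul (inv_nonneg.mpr hα.le) using 1
    module
  have hqu : q = u :=
    hfs_sub.eq_of_isMinOn_add_half_sq (hconj.mem_of_isSubgradientOn hf_sub) hq.1 hq.isMinOn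
  rw [hqu, smul_smul, mul_inv_cancel₀ hα.ne', one_smul, add_sub_cancel]
end
end

section
/- Let f, g be closed convex proper functions on R^n, α > 0, and let the DRS-gf iteration be u^{k+1} = prox_{α^{-1} g*}(u^k + x^k/α), x^{k+1} = prox_{αf}(x^k − α(2u^{k+1} − u^k)). Then the ergodic iterates x̄^K = (1/K)∑_{k=1}^K x^k, ū^K = (1/K)∑_{k=1}^K u^k satisfy L(x̄^K, u) − L(x, ū^K) ≤ (1/(α(K+1)))(‖x^0 − x‖² + α²‖u^0 − u‖²) for all x ∈ dom f and u ∈ dom g*, where L(x,u) = f(x) + ⟨u, x⟩ − g*(u). -/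
open Finset RealInnerProductSpace

noncomputable section

/-!
Put `z = x + α u`. The prox steps say that `xᵏ - α(2uᵏ⁺¹ - uᵏ) - xᵏ⁺¹` and `uᵏ + α⁻¹xᵏ - uᵏ⁺¹`
are subgradients of `α f` at `xᵏ⁺¹` and of `α⁻¹ g*` at `uᵏ⁺¹`; adding the two subgradient
inequalities gives, by a bilinear identity,
`2α (L(xᵏ⁺¹, u) - L(x, uᵏ⁺¹)) ≤ ‖zᵏ - z‖² - ‖zᵏ⁺¹ - z‖² - ‖zᵏ⁺¹ - zᵏ‖²`.
Summing over `k < K` telescopes, and the step lengths are kept rather than dropped: the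
Cauchy–Schwarz bound `‖z⁰ - z‖² ≤ (K + 1)(∑ ‖zᵏ⁺¹ - zᵏ‖² + ‖zᴷ - z‖²)` along the path
`z⁰, …, zᴷ, z` turns the right-hand side into `K/(K+1) ‖z⁰ - z‖²`, which gives the factor
`K + 1`. Jensen's inequality for `f` and `g*` passes from the average of the gaps to the gap at
the averaged iterates, and `‖z⁰ - z‖² ≤ 2(‖x⁰ - x‖² + α²‖u⁰ - u‖²)`.
-/

open Filter Topology

theorem dist_sq_le_mul_sum_dist_sq {X : Type*} [PseudoMetricSpace X] (z : ℕ → X) (m : ℕ) :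
    dist (z 0) (z m) ^ 2 ≤ m * ∑ i ∈ range m, dist (z i) (z (i + 1)) ^ 2 := by
  calc dist (z 0) (z m) ^ 2 ≤ (∑ i ∈ range m, dist (z i) (z (i + 1))) ^ 2 := by
        gcongr; exact dist_le_range_sum_dist z m
    _ ≤ m * ∑ i ∈ range m, dist (z i) (z (i + 1)) ^ 2 := by
        simpa using sq_sum_le_card_mul_sum_sq (s := range m) (f := fun i => dist (z i) (z (i + 1)))

theorem add_one_mul_sum_norm_sub_sq_le {E : Type*} [SeminormedAddCommGroup E] (z : ℕ → E) (c : E)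
    (K : ℕ) :
    ((K : ℝ) + 1) * ∑ k ∈ range K, (‖z k - c‖ ^ 2 - ‖z (k + 1) - c‖ ^ 2 - ‖z (k + 1) - z k‖ ^ 2)
      ≤ K * ‖z 0 - c‖ ^ 2 := by
  set w : ℕ → E := fun k => if k ≤ K then z k else c
  have hcs := dist_sq_le_mul_sum_dist_sq w (K + 1)
  have hw : ∑ i ∈ range (K + 1), dist (w i) (w (i + 1)) ^ 2 =
      ∑ k ∈ range K, ‖z (k + 1) - z k‖ ^ 2 + ‖z K - c‖ ^ 2 := by
    rw [sum_range_succ]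
    congr 1
    · refine sum_congr rfl fun k hk => ?_
      have hk : k < K := mem_range.mp hk
      simp [w, hk.le, Nat.succ_le_of_lt hk, dist_eq_norm', norm_sub_rev]
    · simp [w, dist_eq_norm]
  have htel := sum_range_sub' (fun k => ‖z k - c‖ ^ 2) K
  rw [show w 0 = z 0 from if_pos K.zero_le, show w (K + 1) = c from if_neg (by omega), hw,
    dist_eq_norm] at hcs
  push_cast at hcs
  rw [sum_sub_distrib, htel]
  linear_combination hcs

section InnerProductSpace

variable {E : Type*} [NormedAddCommGroup E] [InnerProductSpace ℝ E]

def lagrangian (f gs : E → ℝ) (x u : E) : ℝ := f x + ⟪u, x⟫ - gs u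

theorem lagrangian_sub_le_sum {ι : Type*} {f gs : E → ℝ} {Df Dgs : Set E} (hf : ConvexOn ℝ Df f)
    (hgs : ConvexOn ℝ Dgs gs) {s : Finset ι} {w : ι → ℝ} (hw₀ : ∀ i ∈ s, 0 ≤ w i)
    (hw₁ : ∑ i ∈ s, w i = 1) {x u : ι → E} (hx : ∀ i ∈ s, x i ∈ Df) (hu : ∀ i ∈ s, u i ∈ Dgs)
    (xx uu : E) :
    lagrangian f gs (∑ i ∈ s, w i • x i) uu - lagrangian f gs xx (∑ i ∈ s, w i • u i) ≤
      ∑ i ∈ s, w i * (lagrangian f gs (x i) uu - lagrangian f gs xx (u i)) := by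
  have hfx := hf.map_sum_le hw₀ hw₁ hx
  have hgu := hgs.map_sum_le hw₀ hw₁ hu
  have hconst : ∀ c : ℝ, ∑ i ∈ s, w i * c = c := fun c => by rw [← sum_mul, hw₁, one_mul]
  simp only [smul_eq_mul] at hfx hgu
  simp only [lagrangian, mul_sub, mul_add, sum_add_distrib, sum_sub_distrib, hconst,
    inner_sum, sum_inner, real_inner_smul_left, real_inner_smul_right]
  linarith

theorem inner_sub_sub_eq_half_norm_sq (a b c : E) :
    ⟪a - b, b - c⟫ = (‖a - c‖ ^ 2 - ‖a - b‖ ^ 2 - ‖b - c‖ ^ 2) / 2 := by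
  rw [show a - c = (a - b) + (b - c) by abel, norm_add_sq_real]
  ring

theorem drs_gf_step_gap_le (f gs : E → ℝ) {α : ℝ} (hα : 0 < α) {xk xp uk up xx uu : E}
    (hu : α⁻¹ * gs up + ⟪uk + α⁻¹ • xk - up, uu - up⟫ ≤ α⁻¹ * gs uu)
    (hx : α * f xp + ⟪xk - α • ((2 : ℝ) • up - uk) - xp, xx - xp⟫ ≤ α * f xx) :
    α * (lagrangian f gs xp uu - lagrangian f gs xx up) ≤
      ⟪(xk + α • uk) - (xp + α • up), (xp + α • up) - (xx + α • uu)⟫ := by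
  have hu' : gs up + ⟪α • (uk - up) + xk, uu - up⟫ ≤ gs uu := by
    have h := mul_le_mul_of_nonneg_left hu hα.le
    rwa [mul_add, ← mul_assoc, ← mul_assoc, mul_inv_cancel₀ hα.ne', one_mul, one_mul,
      ← real_inner_smul_left, smul_sub, smul_add, smul_smul, mul_inv_cancel₀ hα.ne', one_smul,
      add_sub_right_comm, ← smul_sub] at h
  simp only [lagrangian, inner_add_left, inner_sub_left, inner_add_right, inner_sub_right,
    real_inner_smul_right, real_inner_comm] at hu' hx ⊢
  linear_combination α * hu' + hx

end InnerProductSpace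

theorem IsProxOn.add_inner_le {n : ℕ} {D : Set (EuclideanSpace ℝ (Fin n))}
    {φ : EuclideanSpace ℝ (Fin n) → ℝ} (hφ : ConvexOn ℝ D φ) {x p y : EuclideanSpace ℝ (Fin n)}
    (hp : IsProxOn D φ x p) (hy : y ∈ D) : φ p + ⟪x - p, y - p⟫ ≤ φ y := by
  have hseg : ∀ t ∈ Set.Ioc (0 : ℝ) 1, φ p + ⟪x - p, y - p⟫ ≤ φ y + t / 2 * ‖y - p‖ ^ 2 := by
    -- compare `p` with the point `p + t • (y - p)` of the segment, then let `t → 0`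
    rintro t ⟨ht₀, ht₁⟩
    have hpt : p + t • (y - p) = (1 - t) • p + t • y := by module
    have hmem : p + t • (y - p) ∈ D := hφ.1.add_smul_sub_mem hp.1 hy ⟨ht₀.le, ht₁⟩
    have hconv : φ (p + t • (y - p)) ≤ (1 - t) * φ p + t * φ y := by
      rw [hpt]; exact hφ.2 hp.1 hy (by linarith) ht₀.le (by ring)
    have hnorm : ‖p + t • (y - p) - x‖ ^ 2 =
        ‖p - x‖ ^ 2 + 2 * t * ⟪p - x, y - p⟫ + t ^ 2 * ‖y - p‖ ^ 2 := by
      rw [add_sub_right_comm, norm_add_sq_real, norm_smul, real_inner_smul_right, mul_pow,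
        Real.norm_eq_abs, sq_abs]
      ring
    have hmin := hp.2 _ hmem
    rw [hnorm] at hmin
    have : t * (φ p + ⟪x - p, y - p⟫) ≤ t * (φ y + t / 2 * ‖y - p‖ ^ 2) := by
      rw [← neg_sub p x, inner_neg_left]
      nlinarith
    exact le_of_mul_le_mul_left this ht₀
  have hlim : Tendsto (fun t : ℝ => φ y + t / 2 * ‖y - p‖ ^ 2) (𝓝[>] 0) (𝓝 (φ y)) := by
    have : Continuous fun t : ℝ => φ y + t / 2 * ‖y - p‖ ^ 2 := by fun_prop
    simpa using (this.tendsto 0).mono_left nhdsWithin_le_nhds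
  exact ge_of_tendsto hlim (eventually_of_mem (Ioc_mem_nhdsGT one_pos) hseg)

theorem IsConjugateOn.convexOn {n : ℕ} {Dg Dgs : Set (EuclideanSpace ℝ (Fin n))}
    {g gs : EuclideanSpace ℝ (Fin n) → ℝ} (hconj : IsConjugateOn Dg g Dgs gs) :
    ConvexOn ℝ Dgs gs := by
  have hub : ∀ u₁ ∈ Dgs, ∀ u₂ ∈ Dgs, ∀ a b : ℝ, 0 ≤ a → 0 ≤ b → a + b = 1 →
      a * gs u₁ + b * gs u₂ ∈ upperBounds ((fun x => ⟪a • u₁ + b • u₂, x⟫ - g x) '' Dg) := by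
    rintro u₁ h₁ u₂ h₂ a b ha hb hab _ ⟨x, hx, rfl⟩
    have e₁ : ⟪u₁, x⟫ - g x ≤ gs u₁ := ((hconj u₁).2 h₁).1 ⟨x, hx, rfl⟩
    have e₂ : ⟪u₂, x⟫ - g x ≤ gs u₂ := ((hconj u₂).2 h₂).1 ⟨x, hx, rfl⟩
    simp only [inner_add_left, real_inner_smul_left]
    linear_combination a * e₁ + b * e₂ + g x * hab
  have hmem : ∀ u₁ ∈ Dgs, ∀ u₂ ∈ Dgs, ∀ a b : ℝ, 0 ≤ a → 0 ≤ b → a + b = 1 →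
      a • u₁ + b • u₂ ∈ Dgs := fun u₁ h₁ u₂ h₂ a b ha hb hab =>
    (hconj _).1.mpr ⟨_, hub u₁ h₁ u₂ h₂ a b ha hb hab⟩
  exact ⟨hmem, fun u₁ h₁ u₂ h₂ a b ha hb hab =>
    ((hconj _).2 (hmem u₁ h₁ u₂ h₂ a b ha hb hab)).2 (hub u₁ h₁ u₂ h₂ a b ha hb hab)⟩

theorem drs_gf_sum_gap_le {n : ℕ} {α : ℝ} (hα : 0 < α) {Df Dgs : Set (EuclideanSpace ℝ (Fin n))}
    {f gs : EuclideanSpace ℝ (Fin n) → ℝ} (hf : ConvexOn ℝ Df f) (hgs : ConvexOn ℝ Dgs gs)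
    {x u : ℕ → EuclideanSpace ℝ (Fin n)}
    (hu : ∀ k, IsProxOn Dgs (fun v => α⁻¹ * gs v) (u k + α⁻¹ • x k) (u (k + 1)))
    (hx : ∀ k, IsProxOn Df (fun v => α * f v)
      (x k - α • ((2 : ℝ) • u (k + 1) - u k)) (x (k + 1)))
    {xx uu : EuclideanSpace ℝ (Fin n)} (hxx : xx ∈ Df) (huu : uu ∈ Dgs) (K : ℕ) :
    α * ((K : ℝ) + 1) *
        ∑ k ∈ range K, (lagrangian f gs (x (k + 1)) uu - lagrangian f gs xx (u (k + 1))) ≤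
      K * (‖x 0 - xx‖ ^ 2 + α ^ 2 * ‖u 0 - uu‖ ^ 2) := by
  have hstep : ∀ k, 2 * α * (lagrangian f gs (x (k + 1)) uu - lagrangian f gs xx (u (k + 1))) ≤
      ‖x k + α • u k - (xx + α • uu)‖ ^ 2 - ‖x (k + 1) + α • u (k + 1) - (xx + α • uu)‖ ^ 2 -
        ‖x (k + 1) + α • u (k + 1) - (x k + α • u k)‖ ^ 2 := fun k => by
    have h := drs_gf_step_gap_le f gs hα
      ((hu k).add_inner_le (hgs.smul (inv_nonneg.2 hα.le)) huu)
      ((hx k).add_inner_le (hf.smul hα.le) hxx)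
    rw [inner_sub_sub_eq_half_norm_sq,
      norm_sub_rev (x k + α • u k) (x (k + 1) + α • u (k + 1))] at h
    linarith
  have hinit : ‖x 0 + α • u 0 - (xx + α • uu)‖ ^ 2 ≤
      2 * (‖x 0 - xx‖ ^ 2 + α ^ 2 * ‖u 0 - uu‖ ^ 2) := by
    have hsplit : x 0 + α • u 0 - (xx + α • uu) = (x 0 - xx) + α • (u 0 - uu) := by module
    calc ‖x 0 + α • u 0 - (xx + α • uu)‖ ^ 2 ≤ (‖x 0 - xx‖ + α * ‖u 0 - uu‖) ^ 2 := by
          rw [hsplit]; gcongr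
          exact (norm_add_le _ _).trans_eq (by rw [norm_smul, Real.norm_of_nonneg hα.le])
      _ ≤ 2 * (‖x 0 - xx‖ ^ 2 + α ^ 2 * ‖u 0 - uu‖ ^ 2) := by rw [← mul_pow]; exact add_sq_le
  have htel := add_one_mul_sum_norm_sub_sq_le (fun k => x k + α • u k) (xx + α • uu) K
  have hsum := sum_le_sum fun k (_ : k ∈ range K) => hstep k
  rw [← mul_sum] at hsum
  linear_combination ((K : ℝ) + 1) / 2 * hsum + htel / 2 + (K : ℝ) / 2 * hinit

theorem drs_gf_ergodic_rate_general (n K : ℕ) (hK : 1 ≤ K) (α : ℝ) (hα : 0 < α)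
    (Df Dg Dgs : Set (EuclideanSpace ℝ (Fin n)))
    (f g gs : EuclideanSpace ℝ (Fin n) → ℝ)
    (hf : IsCCP Df f) (hconj : IsConjugateOn Dg g Dgs gs)
    (x u : ℕ → EuclideanSpace ℝ (Fin n))
    (hu : ∀ k, IsProxOn Dgs (fun v => α⁻¹ * gs v) (u k + α⁻¹ • x k) (u (k + 1)))
    (hx : ∀ k, IsProxOn Df (fun v => α * f v)
      (x k - α • ((2 : ℝ) • u (k + 1) - u k)) (x (k + 1))) :
    ∀ xx ∈ Df, ∀ uu ∈ Dgs,
      (f ((K : ℝ)⁻¹ • ∑ k ∈ Icc 1 K, x k) +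
          ⟪uu, (K : ℝ)⁻¹ • ∑ k ∈ Icc 1 K, x k⟫ - gs uu) -
        (f xx + ⟪(K : ℝ)⁻¹ • ∑ k ∈ Icc 1 K, u k, xx⟫ -
          gs ((K : ℝ)⁻¹ • ∑ k ∈ Icc 1 K, u k)) ≤
      (1 / (α * ((K : ℝ) + 1))) * (‖x 0 - xx‖ ^ 2 + α ^ 2 * ‖u 0 - uu‖ ^ 2) := by
  intro xx hxx uu huu
  have hKpos : (0 : ℝ) < K := Nat.cast_pos.mpr hK
  have hw : ∑ _k ∈ Icc 1 K, (K : ℝ)⁻¹ = 1 := by simp [hKpos.ne']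
  have hiter : ∀ k ∈ Icc 1 K, x k ∈ Df ∧ u k ∈ Dgs := fun k hk => by
    obtain ⟨j, rfl⟩ := Nat.exists_eq_add_of_le' (mem_Icc.mp hk).1
    exact ⟨(hx j).1, (hu j).1⟩
  have havg := lagrangian_sub_le_sum hf.2.1 hconj.convexOn (fun _ _ => by positivity) hw
    (fun k hk => (hiter k hk).1) (fun k hk => (hiter k hk).2) xx uu
  have hsum := drs_gf_sum_gap_le hα hf.2.1 hconj.convexOn hu hx hxx huu K
  have hshift : ∀ F : ℕ → ℝ, ∑ k ∈ Icc 1 K, F k = ∑ k ∈ range K, F (k + 1) := fun F => by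
    rw [← Ico_add_one_right_eq_Icc, sum_Ico_eq_sum_range]; simp [add_comm]
  rw [← smul_sum, ← smul_sum, ← mul_sum, hshift] at havg
  refine havg.trans ?_
  rw [inv_mul_le_iff₀ hKpos, one_div, ← div_eq_inv_mul, mul_div_assoc',
    le_div_iff₀ (by positivity)]
  linarith

/-- Ergodic convergence of DRS-gf: the primal–dual gap of the averaged iterates is
bounded by `(‖x⁰ − x‖² + α²‖u⁰ − u‖²)/(α(K+1))`. -/
theorem drs_gf_ergodic_rate (n K : ℕ) (hK : 1 ≤ K) (α : ℝ) (hα : 0 < α)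
    (Df Dg Dgs : Set (EuclideanSpace ℝ (Fin n)))
    (f g gs : EuclideanSpace ℝ (Fin n) → ℝ)
    (hf : IsCCP Df f) (hg : IsCCP Dg g) (hconj : IsConjugateOn Dg g Dgs gs)
    (x u : ℕ → EuclideanSpace ℝ (Fin n))
    (hu : ∀ k, IsProxOn Dgs (fun v => α⁻¹ * gs v) (u k + α⁻¹ • x k) (u (k + 1)))
    (hx : ∀ k, IsProxOn Df (fun v => α * f v)
      (x k - α • ((2 : ℝ) • u (k + 1) - u k)) (x (k + 1))) :
    ∀ xx ∈ Df, ∀ uu ∈ Dgs,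
      (f ((K : ℝ)⁻¹ • ∑ k ∈ Icc 1 K, x k) +
          ⟪uu, (K : ℝ)⁻¹ • ∑ k ∈ Icc 1 K, x k⟫ - gs uu) -
        (f xx + ⟪(K : ℝ)⁻¹ • ∑ k ∈ Icc 1 K, u k, xx⟫ -
          gs ((K : ℝ)⁻¹ • ∑ k ∈ Icc 1 K, u k)) ≤
      (1 / (α * ((K : ℝ) + 1))) * (‖x 0 - xx‖ ^ 2 + α ^ 2 * ‖u 0 - uu‖ ^ 2) :=
  drs_gf_ergodic_rate_general n K hK α hα Df Dg Dgs f g gs hf hconj x u hu hx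
end
end

section
/- For any K ≥ 1 and α > 0, there exist closed convex proper functions f, g on R^n and points x^0, u^0, x̃, ũ with ‖x^0 − x̃‖² + α²‖u^0 − ũ‖² = 1 such that the DRS-gf iterates satisfy L(x̄^K, ũ) − L(x̃, ū^K) = 1/(α(K+1)); in particular one may take f(x) = (√2/(α(K+1)))‖x‖, g = 0, x^0 = e/√2, u^0 = x^0/α, x̃ = ũ = 0 with e a unit vector. -/
/-!
With `g = 0` the conjugate `g*` is the indicator of `{0}`, so every dual iterate `u^k`, `k ≥ 1`,
vanishes and DRS-gf reduces to iterating `prox_{αf}` from `x⁰ + αu⁰ = √2 e`. For `f = c‖·‖` this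
prox is soft thresholding, which moves a point of the ray `ℝ₊ e` towards `0` by `αc = √2/(K+1)`.
Hence `x^k = (√2 - k√2/(K+1)) e` for `1 ≤ k ≤ K`, the ergodic average is `x̄^K = e/√2` and
`ū^K = 0`, and the gap is `f(e/√2) = 1/(α(K+1))`.
-/

open Finset RealInnerProductSpace

noncomputable section

variable {n : ℕ}

lemma isCCP_univ_of_continuous {f : EuclideanSpace ℝ (Fin n) → ℝ}
    (hconv : ConvexOn ℝ Set.univ f) (hcont : Continuous f) : IsCCP Set.univ f := by
  refine ⟨Set.univ_nonempty, hconv, ?_⟩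
  simp only [Set.mem_univ, true_and]
  exact isClosed_le (by fun_prop) continuous_snd

lemma isConjugateOn_zero :
    IsConjugateOn (Set.univ : Set (EuclideanSpace ℝ (Fin n))) (fun _ => 0) {0} (fun _ => 0) := by
  intro u
  by_cases hu : u = 0
  · subst hu
    have hrange : (fun x => ⟪(0 : EuclideanSpace ℝ (Fin n)), x⟫ - (0 : ℝ)) '' Set.univ = {0} := by
      simp
    simp only [Set.mem_singleton_iff, hrange, bddAbove_singleton, isLUB_singleton, imp_self,
      and_self]
  · refine ⟨⟨fun h => absurd h hu, fun ⟨b, hb⟩ => ?_⟩, fun h => absurd h hu⟩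
    have hpos : 0 < ‖u‖ ^ 2 := by positivity
    -- `⟪u, r • u⟫ = r ‖u‖²` is unbounded in `r`
    have hle := hb (Set.mem_image_of_mem _ (Set.mem_univ (((b + 1) / ‖u‖ ^ 2) • u)))
    rw [real_inner_smul_right, real_inner_self_eq_norm_sq, sub_zero,
      div_mul_cancel₀ _ hpos.ne'] at hle
    linarith

lemma IsProxOn.unique {D : Set (EuclideanSpace ℝ (Fin n))} {F : EuclideanSpace ℝ (Fin n) → ℝ}
    (hF : ConvexOn ℝ D F) {x p q : EuclideanSpace ℝ (Fin n)}
    (hp : IsProxOn D F x p) (hq : IsProxOn D F x q) : p = q := by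
  set m := (1 / 2 : ℝ) • p + (1 / 2 : ℝ) • q
  have hFm : F m ≤ (1 / 2) * F p + (1 / 2) * F q :=
    hF.2 hp.1 hq.1 (by norm_num) (by norm_num) (by norm_num)
  have hnorm_m : ‖m - x‖ ^ 2
      = (1 / 2) * ‖p - x‖ ^ 2 + (1 / 2) * ‖q - x‖ ^ 2 - (1 / 4) * ‖p - q‖ ^ 2 := by
    rw [show m - x = (1 / 2 : ℝ) • ((p - x) + (q - x)) by module,
      show p - q = (p - x) - (q - x) by abel, norm_smul, mul_pow, norm_add_sq_real,
      norm_sub_sq_real (p - x)]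
    norm_num
    ring
  -- strong convexity of the proximal objective: at `m` it is `‖p - q‖² / 8` below its average
  -- over `p` and `q`
  have hpm := hp.2 m (hF.1 hp.1 hq.1 (by norm_num) (by norm_num) (by norm_num))
  have hqp := hq.2 p hp.1
  have : ‖p - q‖ ^ 2 ≤ 0 := by nlinarith
  exact sub_eq_zero.mp (norm_eq_zero.mp (pow_eq_zero_iff two_ne_zero |>.mp
    (le_antisymm this (sq_nonneg _))))

lemma isProxOn_mul_norm_smul {e : EuclideanSpace ℝ (Fin n)} (he : ‖e‖ = 1)
    {t s : ℝ} (ht : 0 ≤ t) (hts : t ≤ s) :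
    IsProxOn Set.univ (fun v => t * ‖v‖) (s • e) ((s - t) • e) := by
  refine ⟨Set.mem_univ _, fun z _ => ?_⟩
  have hnorm_se : ‖s • e‖ = s := by
    rw [norm_smul, he, mul_one, Real.norm_of_nonneg (ht.trans hts)]
  have hdist : (‖z‖ - s) ^ 2 ≤ ‖z - s • e‖ ^ 2 := by
    have h := abs_norm_sub_norm_le z (s • e)
    rw [hnorm_se] at h
    rw [← sq_abs]
    exact pow_le_pow_left₀ (abs_nonneg _) h 2
  have hp : ‖(s - t) • e‖ = s - t := by
    rw [norm_smul, he, mul_one, Real.norm_of_nonneg (by linarith)]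
  have hd : ‖(s - t) • e - s • e‖ = t := by
    rw [← sub_smul, sub_sub_cancel_left, norm_smul, he, mul_one, norm_neg,
      Real.norm_of_nonneg ht]
  beta_reduce
  rw [hp, hd]
  -- the gap is `(‖z‖ - (s - t))² / 2`
  nlinarith [sq_nonneg (‖z‖ - s + t)]

lemma eq_sub_smul_of_isProxOn_mul_norm {e : EuclideanSpace ℝ (Fin n)} (he : ‖e‖ = 1)
    {t s : ℝ} (ht : 0 ≤ t) {y : ℕ → EuclideanSpace ℝ (Fin n)} (hy0 : y 0 = s • e)
    (hy : ∀ k, IsProxOn Set.univ (fun v => t * ‖v‖) (y k) (y (k + 1))) :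
    ∀ k : ℕ, k * t ≤ s → y k = (s - k * t) • e := by
  have hconv : ConvexOn ℝ Set.univ (fun v : EuclideanSpace ℝ (Fin n) => t * ‖v‖) :=
    (convexOn_norm convex_univ).smul ht
  intro k
  induction k with
  | zero => exact fun _ => by simpa using hy0
  | succ k ih =>
    intro hk
    push_cast at hk ⊢
    have hy_k := ih (by linarith)
    have hprox := hy k
    rw [hy_k] at hprox
    rw [hprox.unique hconv (isProxOn_mul_norm_smul he ht (by linarith)), sub_sub, add_mul, one_mul]

lemma sum_Icc_sub_mul (K : ℕ) (s t : ℝ) :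
    ∑ k ∈ Icc 1 K, (s - k * t) = K * (s - (K + 1) * t / 2) := by
  induction K with
  | zero => simp
  | succ K ih =>
    rw [sum_Icc_succ_top (by omega), ih]
    push_cast
    ring

lemma drs_gf_norm_ergodic_avg {K : ℕ} (hK : 1 ≤ K) {α c s : ℝ} (hαc : 0 ≤ α * c)
    {e : EuclideanSpace ℝ (Fin n)} (he : ‖e‖ = 1) (hKs : K * (α * c) ≤ s)
    {x u : ℕ → EuclideanSpace ℝ (Fin n)} (hxu0 : x 0 + α • u 0 = s • e)
    (hu : ∀ k, u (k + 1) = 0)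
    (hx : ∀ k, IsProxOn Set.univ (fun v => α * (c * ‖v‖))
      (x k - α • ((2 : ℝ) • u (k + 1) - u k)) (x (k + 1))) :
    (K : ℝ)⁻¹ • ∑ k ∈ Icc 1 K, x k = (s - (K + 1) * (α * c) / 2) • e := by
  set y : ℕ → EuclideanSpace ℝ (Fin n) := fun k => x k - α • ((2 : ℝ) • u (k + 1) - u k)
  have hxy : ∀ k, y (k + 1) = x (k + 1) := fun k => by simp [y, hu]
  have hy0 : y 0 = s • e := by simp [y, hu, ← hxu0]
  have hy : ∀ k, IsProxOn Set.univ (fun v => (α * c) * ‖v‖) (y k) (y (k + 1)) := fun k => by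
    simpa only [hxy, mul_assoc] using hx k
  have hx_eq : ∀ k ∈ Icc 1 K, x k = (s - k * (α * c)) • e := by
    intro k hk
    obtain ⟨hk1, hkK⟩ := mem_Icc.mp hk
    obtain ⟨j, rfl⟩ := Nat.exists_eq_add_of_le' hk1
    rw [← hxy]
    refine eq_sub_smul_of_isProxOn_mul_norm he hαc hy0 hy _ (le_trans ?_ hKs)
    exact mul_le_mul_of_nonneg_right (by exact_mod_cast hkK) hαc
  have hK0 : (K : ℝ) ≠ 0 := by positivity
  rw [sum_congr rfl hx_eq, ← sum_smul, smul_smul, sum_Icc_sub_mul, inv_mul_cancel_left₀ hK0]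

/-- Worst-case example for DRS-gf: the ergodic primal–dual gap bound
`1/(α(K+1))` is attained; one may take `f = (√2/(α(K+1)))‖·‖`, `g = 0`,
`x⁰ = e/√2`, `u⁰ = x⁰/α`, `x̃ = ũ = 0` with `e` a unit vector. -/
theorem drs_gf_worst_case (n K : ℕ) (hn : 0 < n) (hK : 1 ≤ K) (α : ℝ) (hα : 0 < α) :
    ∃ (Df Dg Dgs : Set (EuclideanSpace ℝ (Fin n)))
      (f g gs : EuclideanSpace ℝ (Fin n) → ℝ)
      (x0 u0 xt ut e : EuclideanSpace ℝ (Fin n)),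
      IsCCP Df f ∧ IsCCP Dg g ∧ IsConjugateOn Dg g Dgs gs ∧
      xt ∈ Df ∧ ut ∈ Dgs ∧
      ‖e‖ = 1 ∧
      f = (fun v => (Real.sqrt 2 / (α * ((K : ℝ) + 1))) * ‖v‖) ∧ Df = Set.univ ∧
      g = (fun _ => (0 : ℝ)) ∧ Dg = Set.univ ∧
      x0 = (Real.sqrt 2)⁻¹ • e ∧ u0 = α⁻¹ • x0 ∧ xt = 0 ∧ ut = 0 ∧
      ‖x0 - xt‖ ^ 2 + α ^ 2 * ‖u0 - ut‖ ^ 2 = 1 ∧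
      ∀ (x u : ℕ → EuclideanSpace ℝ (Fin n)), x 0 = x0 → u 0 = u0 →
        (∀ k, IsProxOn Dgs (fun v => α⁻¹ * gs v) (u k + α⁻¹ • x k) (u (k + 1))) →
        (∀ k, IsProxOn Df (fun v => α * f v)
          (x k - α • ((2 : ℝ) • u (k + 1) - u k)) (x (k + 1))) →
        (f ((K : ℝ)⁻¹ • ∑ k ∈ Icc 1 K, x k) +
            ⟪ut, (K : ℝ)⁻¹ • ∑ k ∈ Icc 1 K, x k⟫ - gs ut) -
          (f xt + ⟪(K : ℝ)⁻¹ • ∑ k ∈ Icc 1 K, u k, xt⟫ -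
            gs ((K : ℝ)⁻¹ • ∑ k ∈ Icc 1 K, u k)) =
        1 / (α * ((K : ℝ) + 1)) := by
  have hs2 : Real.sqrt 2 ^ 2 = 2 := Real.sq_sqrt (by norm_num)
  obtain ⟨e, he⟩ : ∃ e : EuclideanSpace ℝ (Fin n), ‖e‖ = 1 :=
    ⟨EuclideanSpace.single ⟨0, hn⟩ 1, by simp⟩
  set c := Real.sqrt 2 / (α * ((K : ℝ) + 1))
  have hc : 0 ≤ c := by positivity
  have hαc : α * c = Real.sqrt 2 / ((K : ℝ) + 1) := by
    simp only [c]
    field_simp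
  refine ⟨Set.univ, Set.univ, {0}, fun v => c * ‖v‖, fun _ => 0, fun _ => 0, (Real.sqrt 2)⁻¹ • e,
    α⁻¹ • (Real.sqrt 2)⁻¹ • e, 0, 0, e,
    isCCP_univ_of_continuous ((convexOn_norm convex_univ).smul hc) (by fun_prop),
    isCCP_univ_of_continuous (convexOn_const 0 convex_univ) continuous_const,
    isConjugateOn_zero, Set.mem_univ _, rfl, he, rfl, rfl, rfl, rfl, rfl, rfl, rfl, rfl, ?_, ?_⟩
  · simp only [sub_zero, norm_smul, he, norm_inv, Real.norm_of_nonneg hα.le,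
      Real.norm_of_nonneg (Real.sqrt_nonneg 2)]
    field_simp
    linarith
  · intro x u hx0 hu0 hu hx
    have hxu0 : x 0 + α • u 0 = Real.sqrt 2 • e := by
      rw [hu0, hx0, smul_inv_smul₀ hα.ne', ← two_smul ℝ, smul_smul]
      congr 1
      field_simp
      linarith
    have hKs : (K : ℝ) * (α * c) ≤ Real.sqrt 2 := by
      rw [hαc, mul_div_assoc', div_le_iff₀ (by positivity)]
      nlinarith [Real.sqrt_nonneg 2]
    have hu_sum : ∑ k ∈ Icc 1 K, u k = 0 := sum_eq_zero fun k hk => by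
      obtain ⟨j, rfl⟩ := Nat.exists_eq_add_of_le' (mem_Icc.mp hk).1
      exact (hu j).1
    rw [drs_gf_norm_ergodic_avg hK (by positivity) he hKs hxu0 (fun k => (hu k).1) hx, hu_sum]
    simp only [hαc, smul_zero, inner_zero_left, inner_zero_right, norm_zero, norm_smul, he]
    rw [mul_div_cancel₀ _ (by positivity), sub_half, Real.norm_of_nonneg (by positivity)]
    simp only [c]
    field_simp
    linarith
end
end

section
/- With f(x) = (√2/(α(K+1)))‖x‖, g = 0, x^0 = e/√2, u^0 = x^0/α (e a unit vector), the DRS-gf iterates satisfy u^k = 0 for all k ≥ 1 and x^k = √2(1 − k/(K+1)) e for k = 1,...,K; hence the ergodic average satisfies x̄^K = (√2/K) ∑_{k=1}^K (1 − k/(K+1)) e and f(x̄^K) = 1/(α(K+1)). -/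
open Finset RealInnerProductSpace

noncomputable section

lemma prox_unique' {n : ℕ} (c : ℝ) (hc : 0 ≤ c) (w p q : EuclideanSpace ℝ (Fin n))
    (hp : ∀ y, c * ‖p‖ + (1 / 2) * ‖p - w‖ ^ 2 ≤ c * ‖y‖ + (1 / 2) * ‖y - w‖ ^ 2)
    (hq : ∀ y, c * ‖q‖ + (1 / 2) * ‖q - w‖ ^ 2 ≤ c * ‖y‖ + (1 / 2) * ‖y - w‖ ^ 2) :
    p = q := by
  set m : EuclideanSpace ℝ (Fin n) := (2:ℝ)⁻¹ • (p + q) with hm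
  have h1 := hp m
  have h2 := hq m
  have hmn : ‖m‖ ≤ (‖p‖ + ‖q‖) / 2 := by
    calc ‖m‖ = (2:ℝ)⁻¹ * ‖p + q‖ := by
          rw [hm, norm_smul]; simp
      _ ≤ (2:ℝ)⁻¹ * (‖p‖ + ‖q‖) := by
          have := norm_add_le p q
          nlinarith
      _ = (‖p‖ + ‖q‖) / 2 := by ring
  have hmw : m - w = (2:ℝ)⁻¹ • ((p - w) + (q - w)) := by
    rw [hm]; module
  have hsq : ‖m - w‖ ^ 2 = (4:ℝ)⁻¹ * (‖p - w‖ ^ 2 + 2 * ⟪p - w, q - w⟫ + ‖q - w‖ ^ 2) := by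
    rw [hmw, norm_smul, mul_pow, ← norm_add_sq_real]
    norm_num [Real.norm_eq_abs]
  have hpq : ‖p - q‖ ^ 2 = ‖p - w‖ ^ 2 - 2 * ⟪p - w, q - w⟫ + ‖q - w‖ ^ 2 := by
    have : p - q = (p - w) - (q - w) := by abel
    rw [this, @norm_sub_sq_real]
  have hcm : c * ‖m‖ ≤ c * ((‖p‖ + ‖q‖) / 2) := by
    exact mul_le_mul_of_nonneg_left hmn hc
  have : ‖p - q‖ ^ 2 ≤ 0 := by nlinarith
  have : ‖p - q‖ = 0 := by nlinarith [norm_nonneg (p - q)]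
  have := norm_sub_eq_zero_iff.mp this
  exact this

lemma soft_thresh {n : ℕ} (c s : ℝ) (hc : 0 ≤ c) (hcs : c ≤ s)
    (e : EuclideanSpace ℝ (Fin n)) (he : ‖e‖ = 1) (y : EuclideanSpace ℝ (Fin n)) :
    c * ‖(s - c) • e‖ + (1 / 2) * ‖(s - c) • e - s • e‖ ^ 2 ≤
      c * ‖y‖ + (1 / 2) * ‖y - s • e‖ ^ 2 := by
  have h1 : ‖(s - c) • e‖ = s - c := by
    rw [norm_smul, he, mul_one, Real.norm_eq_abs, abs_of_nonneg (by linarith)]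
  have h2 : ‖(s - c) • e - s • e‖ = c := by
    have : (s - c) • e - s • e = (-c) • e := by module
    rw [this, norm_smul, he, mul_one, Real.norm_eq_abs, abs_of_nonpos (by linarith)]
    ring
  have h3 : ‖y - s • e‖ ^ 2 = ‖y‖ ^ 2 - 2 * (s * ⟪y, e⟫) + s ^ 2 := by
    rw [norm_sub_sq_real, real_inner_smul_right, norm_smul, he, mul_one, Real.norm_eq_abs, sq_abs]
  have h4 : ⟪y, e⟫ ≤ ‖y‖ := by
    have := real_inner_le_norm y e
    rwa [he, mul_one] at this
  rw [h1, h2, h3]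
  nlinarith [norm_nonneg y, sq_nonneg (‖y‖ - s + c)]

lemma soft_prox {n : ℕ} (c s : ℝ) (hc : 0 ≤ c) (hcs : c ≤ s)
    (e w p : EuclideanSpace ℝ (Fin n)) (he : ‖e‖ = 1) (hw : w = s • e)
    (hp : ∀ y, c * ‖p‖ + (1 / 2) * ‖p - w‖ ^ 2 ≤ c * ‖y‖ + (1 / 2) * ‖y - w‖ ^ 2) :
    p = (s - c) • e := by
  refine prox_unique' c hc w p ((s - c) • e) hp ?_
  intro y
  rw [hw]
  exact soft_thresh c s hc hcs e he y

lemma gauss_Icc (K : ℕ) : ∑ k ∈ Icc 1 K, (k : ℝ) = K * (K + 1) / 2 := by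
  induction K with
  | zero => simp
  | succ m ih =>
    rw [Finset.sum_Icc_succ_top (by omega)]
    push_cast
    rw [ih]
    ring

/-- Explicit DRS-gf iterates for `f = (√2/(α(K+1)))‖·‖`, `g = 0` (so `g* = δ_{0}`),
`x⁰ = e/√2`, `u⁰ = x⁰/α`: `u^k = 0` for `k ≥ 1`, `x^k = √2(1 − k/(K+1)) e` for
`k = 1,…,K`, hence `x̄^K = (√2/K) ∑_{k=1}^K (1 − k/(K+1)) e` and
`f(x̄^K) = 1/(α(K+1))`. -/
theorem drs_gf_example_iterates (n K : ℕ) (hK : 1 ≤ K) (α : ℝ) (hα : 0 < α)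
    (e : EuclideanSpace ℝ (Fin n)) (he : ‖e‖ = 1)
    (x u : ℕ → EuclideanSpace ℝ (Fin n))
    (hx0 : x 0 = (Real.sqrt 2)⁻¹ • e) (hu0 : u 0 = α⁻¹ • ((Real.sqrt 2)⁻¹ • e))
    (hu : ∀ k, IsProxOn ({0} : Set (EuclideanSpace ℝ (Fin n)))
      (fun v => α⁻¹ * (0 : ℝ)) (u k + α⁻¹ • x k) (u (k + 1)))
    (hx : ∀ k, IsProxOn (Set.univ : Set (EuclideanSpace ℝ (Fin n)))
      (fun v => α * ((Real.sqrt 2 / (α * ((K : ℝ) + 1))) * ‖v‖))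
      (x k - α • ((2 : ℝ) • u (k + 1) - u k)) (x (k + 1))) :
    (∀ k, 1 ≤ k → u k = 0) ∧
    (∀ k, 1 ≤ k → k ≤ K → x k = (Real.sqrt 2 * (1 - (k : ℝ) / ((K : ℝ) + 1))) • e) ∧
    (K : ℝ)⁻¹ • ∑ k ∈ Icc 1 K, x k =
      (Real.sqrt 2 / (K : ℝ)) • ∑ k ∈ Icc 1 K, ((1 : ℝ) - (k : ℝ) / ((K : ℝ) + 1)) • e ∧
    (Real.sqrt 2 / (α * ((K : ℝ) + 1))) * ‖(K : ℝ)⁻¹ • ∑ k ∈ Icc 1 K, x k‖ =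
      1 / (α * ((K : ℝ) + 1)) := by
  have hs2 : Real.sqrt 2 * Real.sqrt 2 = 2 := Real.mul_self_sqrt (by norm_num)
  have hs2pos : 0 < Real.sqrt 2 := Real.sqrt_pos.mpr (by norm_num)
  have hK1 : (0:ℝ) < (K : ℝ) + 1 := by positivity
  have hKpos : (0:ℝ) < (K : ℝ) := by exact_mod_cast Nat.cast_pos.mpr hK
  set c : ℝ := Real.sqrt 2 / ((K : ℝ) + 1) with hcdef
  have hc0 : 0 ≤ c := by positivity
  -- u vanishes
  have huz : ∀ k, u (k + 1) = 0 := fun k => (hu k).1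
  have hu1 : ∀ k, 1 ≤ k → u k = 0 := by
    intro k hk
    cases k with
    | zero => omega
    | succ m => exact huz m
  -- prox inequality with simplified constant
  have hca : α * (Real.sqrt 2 / (α * ((K : ℝ) + 1))) = c := by
    rw [hcdef]; field_simp
  have hxp : ∀ k y, c * ‖x (k + 1)‖ +
      (1 / 2) * ‖x (k + 1) - (x k - α • ((2 : ℝ) • u (k + 1) - u k))‖ ^ 2 ≤
      c * ‖y‖ + (1 / 2) * ‖y - (x k - α • ((2 : ℝ) • u (k + 1) - u k))‖ ^ 2 := by
    intro k y
    have h := (hx k).2 y (Set.mem_univ y)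
    simpa only [← mul_assoc, hca] using h
  -- main formula for x
  have hmain : ∀ k, 1 ≤ k → k ≤ K →
      x k = (Real.sqrt 2 * (1 - (k : ℝ) / ((K : ℝ) + 1))) • e := by
    intro k
    induction k with
    | zero => omega
    | succ m ih =>
      intro _ hmK
      rcases Nat.eq_zero_or_pos m with hm0 | hm1
      · subst hm0
        have hw : x 0 - α • ((2 : ℝ) • u 1 - u 0) = Real.sqrt 2 • e := by
          rw [huz 0, hu0, hx0, smul_zero, zero_sub, smul_neg, smul_smul,
            mul_inv_cancel₀ hα.ne', one_smul, sub_neg_eq_add, ← add_smul]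
          congr 1
          rw [← two_mul]
          field_simp
          exact (Real.sq_sqrt (by norm_num)).symm
        have hcs : c ≤ Real.sqrt 2 := by
          rw [hcdef, div_le_iff₀ hK1]
          nlinarith
        have := soft_prox c (Real.sqrt 2) hc0 hcs e _ (x 1) he hw (hxp 0)
        rw [this]
        congr 1
        rw [hcdef]
        push_cast
        field_simp
      · have hmK' : m ≤ K := by omega
        have hxm := ih hm1 hmK'
        set s : ℝ := Real.sqrt 2 * (1 - (m : ℝ) / ((K : ℝ) + 1)) with hsdef
        have hw : x m - α • ((2 : ℝ) • u (m + 1) - u m) = s • e := by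
          rw [huz m, hu1 m hm1, smul_zero, sub_zero, smul_zero, sub_zero, hxm]
        have hmlt : (m : ℝ) + 1 ≤ (K : ℝ) := by exact_mod_cast hmK
        have hcs : c ≤ s := by
          rw [hcdef, hsdef]
          rw [div_le_iff₀ hK1]
          have : Real.sqrt 2 * (1 - (m : ℝ) / ((K : ℝ) + 1)) * ((K : ℝ) + 1)
              = Real.sqrt 2 * ((K : ℝ) + 1 - (m : ℝ)) := by
            field_simp
          rw [this]
          nlinarith
        have := soft_prox c s hc0 hcs e _ (x (m + 1)) he hw (hxp m)
        rw [this]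
        congr 1
        rw [hcdef, hsdef]
        push_cast
        field_simp
        ring
  refine ⟨hu1, hmain, ?_, ?_⟩
  all_goals {
    have hsum : ∑ k ∈ Icc 1 K, x k =
        ∑ k ∈ Icc 1 K, (Real.sqrt 2 * (1 - (k : ℝ) / ((K : ℝ) + 1))) • e :=
      Finset.sum_congr rfl fun k hk =>
        hmain k (Finset.mem_Icc.mp hk).1 (Finset.mem_Icc.mp hk).2
    have h3 : (K : ℝ)⁻¹ • ∑ k ∈ Icc 1 K, x k =
        (Real.sqrt 2 / (K : ℝ)) • ∑ k ∈ Icc 1 K, ((1 : ℝ) - (k : ℝ) / ((K : ℝ) + 1)) • e := by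
      rw [hsum, Finset.smul_sum, Finset.smul_sum]
      refine Finset.sum_congr rfl fun k _ => ?_
      rw [smul_smul, smul_smul]
      congr 1
      ring
    first
    | exact h3
    | (rw [h3]
       have hS : ∑ k ∈ Icc 1 K, ((1 : ℝ) - (k : ℝ) / ((K : ℝ) + 1)) = (K : ℝ) / 2 := by
         rw [Finset.sum_sub_distrib, Finset.sum_const, Nat.card_Icc, ← Finset.sum_div,
           gauss_Icc]
         simp only [nsmul_eq_mul, mul_one]
         have : ((K + 1 - 1 : ℕ) : ℝ) = (K : ℝ) := by push_cast; ring
         rw [this]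
         field_simp
         ring
       rw [← Finset.sum_smul, hS, smul_smul, norm_smul, he, mul_one, Real.norm_eq_abs,
         abs_of_nonneg (by positivity)]
       have h1 : Real.sqrt 2 / (K : ℝ) * ((K : ℝ) / 2) = Real.sqrt 2 / 2 := by
         field_simp
       rw [h1, div_mul_div_comm, hs2, div_eq_div_iff (by positivity) (by positivity)]
       ring)
  }
end
end

section
/- For any K ≥ 1 and α > 0, there exist closed convex proper f, g, a (1/α)-smooth convex h, and points x^0, u^0, x, u with ‖x^0 − x‖² + α²‖u^0 − u‖² = 1 such that the ergodic DYS-gf iterates satisfy L(x̄^K, u) − L(x, ū^K) = (K² − K + 1)/(αK³) > 1/(α(K+1)). -/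
open Finset RealInnerProductSpace

noncomputable section

/-!
With `g` the indicator of the ball of radius `η = ρ (K - 1)` (so `g* = η ‖·‖`) and `f` a multiple
of the norm, both proximal steps are shrinkages of the norm, and `∇h = α⁻¹ •` turns the argument
of the `x`-step into `-α u^{k+1}`. Started on a line `ℝ e`, the iterates stay on it: the first
step gives `x¹ = -ρ K e`, and afterwards the `u`-step lowers `α u^k` by `η` while the `x`-step,
whose threshold `(K - 1) η` exceeds `α u^k`, returns `0`. Averaging these explicit iterates gives
the gap `ρ² K (K² - K + 1) / (2 α)` and the initial distance `ρ² K⁴ / 2`; the paper's choice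
`η_K = √2 (K - 1) / K²` is `ρ = √2 / K²`, which makes the latter `1`.
-/

section Quadratic

variable {F : Type*} [NormedAddCommGroup F] [InnerProductSpace ℝ F]

theorem convexOn_norm_sq_div {a : ℝ} (ha : 0 ≤ a) :
    ConvexOn ℝ Set.univ (fun v : F => ‖v‖ ^ 2 / a) := by
  simpa only [div_eq_inv_mul, Pi.pow_apply, smul_eq_mul] using
    ((convexOn_norm convex_univ).pow (fun v _ => norm_nonneg v) 2).smul (inv_nonneg.2 ha)

theorem hasGradientAt_norm_sq_div_two_mul [CompleteSpace F] (α : ℝ) (z : F) :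
    HasGradientAt (fun v : F => ‖v‖ ^ 2 / (2 * α)) (α⁻¹ • z) z := by
  rw [hasGradientAt_iff_hasFDerivAt]
  have h := (hasStrictFDerivAt_norm_sq z).hasFDerivAt.mul_const (2 * α)⁻¹
  simp only [← div_eq_mul_inv] at h
  refine h.congr_fderiv ?_
  ext v
  simp only [smul_apply, coe_innerSL_apply, InnerProductSpace.toDual_apply_apply,
    real_inner_smul_left, nsmul_eq_mul, Nat.cast_ofNat, smul_eq_mul]
  field_simp

theorem norm_inv_smul_sub_inv_smul_le {α : ℝ} (hα : 0 ≤ α) (z w : F) :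
    ‖α⁻¹ • z - α⁻¹ • w‖ ≤ α⁻¹ * ‖z - w‖ := by
  rw [← smul_sub, norm_smul, Real.norm_of_nonneg (inv_nonneg.2 hα)]

end Quadratic

section ProxNorm

variable {n : ℕ}

local notation "E" => EuclideanSpace ℝ (Fin n)

theorem IsProxOn.eq_of_convexOn {D : Set E} {f : E → ℝ} {w p q : E} (hf : ConvexOn ℝ D f)
    (hp : IsProxOn D f w p) (hq : IsProxOn D f w q) : p = q := by
  set m : E := (2⁻¹ : ℝ) • p + (2⁻¹ : ℝ) • q
  have hm : m ∈ D := hf.1 hp.1 hq.1 (by norm_num) (by norm_num) (by norm_num)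
  have hfm : f m ≤ 2⁻¹ * f p + 2⁻¹ * f q :=
    hf.2 hp.1 hq.1 (by norm_num) (by norm_num) (by norm_num)
  have hpar : ‖m - w‖ ^ 2 = (‖p - w‖ ^ 2 + ‖q - w‖ ^ 2) / 2 - ‖p - q‖ ^ 2 / 4 := by
    have hmw : m - w = (2⁻¹ : ℝ) • ((p - w) + (q - w)) := by module
    have h := parallelogram_law_with_norm ℝ (p - w) (q - w)
    rw [sub_sub_sub_cancel_right] at h
    rw [hmw, norm_smul, mul_pow]
    norm_num
    linarith
  have hsum := add_le_add (hp.2 m hm) (hq.2 m hm)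
  have hpq : ‖p - q‖ ^ 2 ≤ 0 := by linarith
  simpa [sub_eq_zero] using hpq

theorem isProxOn_const_mul_norm_of_norm_le {c : ℝ} {w : E} (hw : ‖w‖ ≤ c) :
    IsProxOn Set.univ (fun v => c * ‖v‖) w 0 := by
  refine ⟨trivial, fun y _ => ?_⟩
  have h1 := norm_sub_sq_real y w
  have h2 := real_inner_le_norm y w
  simp only [norm_zero, mul_zero, zero_sub, norm_neg, zero_add]
  nlinarith [norm_nonneg y]

theorem isProxOn_const_mul_norm_smul {c t : ℝ} {e : E} (hc : 0 ≤ c) (hct : c ≤ t)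
    (he : ‖e‖ = 1) : IsProxOn Set.univ (fun v => c * ‖v‖) (t • e) ((t - c) • e) := by
  refine ⟨trivial, fun y _ => ?_⟩
  show c * ‖(t - c) • e‖ + 1 / 2 * ‖(t - c) • e - t • e‖ ^ 2 ≤ c * ‖y‖ + 1 / 2 * ‖y - t • e‖ ^ 2
  have hdiff : (t - c) • e - t • e = (-c) • e := by module
  have h1 := norm_sub_sq_real y (t • e)
  have h2 : ⟪y, e⟫ ≤ ‖y‖ := by simpa [he] using real_inner_le_norm y e
  rw [real_inner_smul_right, norm_smul, he, Real.norm_eq_abs, abs_of_nonneg (hc.trans hct)] at h1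
  rw [hdiff, norm_smul, norm_smul, he, Real.norm_eq_abs, Real.norm_eq_abs, abs_neg,
    abs_of_nonneg hc, abs_of_nonneg (sub_nonneg.2 hct), h1]
  nlinarith [sq_nonneg (‖y‖ - t + c), norm_nonneg y, mul_le_mul_of_nonneg_left h2 (hc.trans hct)]

theorem convexOn_const_mul_norm {c : ℝ} (hc : 0 ≤ c) :
    ConvexOn ℝ Set.univ (fun v : E => c * ‖v‖) :=
  (convexOn_norm convex_univ).smul hc

theorem IsProxOn.eq_zero_of_norm_le {c : ℝ} {w p : E}
    (hp : IsProxOn Set.univ (fun v => c * ‖v‖) w p) (hw : ‖w‖ ≤ c) : p = 0 :=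
  IsProxOn.eq_of_convexOn (convexOn_const_mul_norm ((norm_nonneg w).trans hw)) hp
    (isProxOn_const_mul_norm_of_norm_le hw)

theorem IsProxOn.eq_sub_smul {c t : ℝ} {e p : E}
    (hp : IsProxOn Set.univ (fun v => c * ‖v‖) (t • e) p) (hc : 0 ≤ c) (hct : c ≤ t)
    (he : ‖e‖ = 1) : p = (t - c) • e :=
  IsProxOn.eq_of_convexOn (convexOn_const_mul_norm hc) hp
    (isProxOn_const_mul_norm_smul hc hct he)

theorem isCCP_const_mul_norm {c : ℝ} (hc : 0 ≤ c) : IsCCP Set.univ (fun v : E => c * ‖v‖) := by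
  refine ⟨Set.univ_nonempty, convexOn_const_mul_norm hc, ?_⟩
  simpa only [Set.mem_univ, true_and] using
    isClosed_le (by fun_prop : Continuous fun p : E × ℝ => c * ‖p.1‖) continuous_snd

theorem isCCP_zero_closedBall {r : ℝ} (hr : 0 ≤ r) :
    IsCCP (Metric.closedBall (0 : E) r) (fun _ => 0) :=
  ⟨Metric.nonempty_closedBall.2 hr, convexOn_const 0 (convex_closedBall 0 r),
    (Metric.isClosed_closedBall.preimage continuous_fst).inter
      (isClosed_le continuous_const continuous_snd)⟩

theorem isConjugateOn_zero_closedBall {r : ℝ} (hr : 0 ≤ r) :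
    IsConjugateOn (Metric.closedBall (0 : E) r) (fun _ => 0) Set.univ (fun u => r * ‖u‖) := by
  intro u
  have hub : r * ‖u‖ ∈ upperBounds ((fun x => ⟪u, x⟫ - 0) '' Metric.closedBall (0 : E) r) := by
    rintro _ ⟨x, hx, rfl⟩
    rw [mem_closedBall_zero_iff] at hx
    nlinarith [real_inner_le_norm u x, norm_nonneg u]
  have hattained : r * ‖u‖ ∈ (fun x => ⟪u, x⟫ - 0) '' Metric.closedBall (0 : E) r := by
    rcases eq_or_ne u 0 with rfl | hu
    · exact ⟨0, by simpa using hr, by simp⟩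
    have hu' : ‖u‖ ≠ 0 := norm_ne_zero_iff.2 hu
    refine ⟨(r / ‖u‖) • u, ?_, ?_⟩
    · rw [mem_closedBall_zero_iff, norm_smul, Real.norm_of_nonneg (by positivity),
        div_mul_cancel₀ r hu']
    · simp only [sub_zero, real_inner_smul_right, real_inner_self_eq_norm_sq]
      field_simp
  exact ⟨iff_of_true trivial ⟨_, hub⟩, fun _ => ⟨hub, fun b hb => hb hattained⟩⟩

end ProxNorm

namespace DysGfBadExample

variable {n : ℕ} {α ρ : ℝ} {K : ℕ}

local notation "E" => EuclideanSpace ℝ (Fin n)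

theorem dysGf_x_step_arg_eq {F : Type*} [AddCommGroup F] [Module ℝ F] (hα : α ≠ 0)
    (x u u' : F) :
    x - α • ((2 : ℝ) • u' - u) - α • (α⁻¹ • (x + α • (u - u'))) = -(α • u') := by
  rw [smul_smul, mul_inv_cancel₀ hα, one_smul]
  module

theorem iterate_one {e p q : E} (hα : 0 < α) (hρ : 0 ≤ ρ) (hK : 1 ≤ K) (he : ‖e‖ = 1)
    (hp : IsProxOn Set.univ (fun v => ρ * (K - 1) / α * ‖v‖) ((ρ * K ^ 2 / α) • e) p)
    (hq : IsProxOn Set.univ (fun v => ρ * (K - 1) ^ 2 * ‖v‖) (-(α • p)) q) :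
    p = (ρ * (K ^ 2 - K + 1) / α) • e ∧ q = -(ρ * K) • e := by
  have hK' : (1 : ℝ) ≤ K := by exact_mod_cast hK
  have hp' : p = (ρ * (K ^ 2 - K + 1) / α) • e := by
    rw [hp.eq_sub_smul (by positivity) (by gcongr; nlinarith) he]
    congr 1
    ring
  refine ⟨hp', ?_⟩
  have hq_arg : -(α • p) = (ρ * (K ^ 2 - K + 1)) • -e := by
    rw [hp', smul_smul, smul_neg, mul_div_cancel₀ _ hα.ne']
  rw [hq_arg] at hq
  rw [hq.eq_sub_smul (by positivity) (by nlinarith) (by rwa [norm_neg]), smul_neg, ← neg_smul]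
  congr 1
  ring

theorem iterate_succ {e p q : E} (hα : 0 < α) (hρ : 0 ≤ ρ) {k : ℕ} (hk : k + 1 ≤ K) (he : ‖e‖ = 1)
    (hp : IsProxOn Set.univ (fun v => ρ * (K - 1) / α * ‖v‖) ((ρ * (K - 1) * (K - k) / α) • e) p)
    (hq : IsProxOn Set.univ (fun v => ρ * (K - 1) ^ 2 * ‖v‖) (-(α • p)) q) :
    p = (ρ * (K - 1) * (K - (k + 1)) / α) • e ∧ q = 0 := by
  have hk' : (k : ℝ) + 1 ≤ K := by exact_mod_cast hk
  have hη : 0 ≤ ρ * (K - 1) := mul_nonneg hρ (by linarith [k.cast_nonneg (α := ℝ)])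
  have hp' : p = (ρ * (K - 1) * (K - (k + 1)) / α) • e := by
    rw [hp.eq_sub_smul (by positivity)
      (div_le_div_of_nonneg_right (le_mul_of_one_le_right hη (by linarith)) hα.le) he]
    congr 1
    ring
  refine ⟨hp', hq.eq_zero_of_norm_le ?_⟩
  rw [hp', norm_neg, smul_smul, mul_div_cancel₀ _ hα.ne', norm_smul, he, mul_one,
    Real.norm_of_nonneg (mul_nonneg hη (by linarith)), sq, ← mul_assoc]
  gcongr
  linarith

theorem iterates_of_two_le {e : E} {x u : ℕ → E} (hα : 0 < α) (hρ : 0 ≤ ρ) (he : ‖e‖ = 1)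
    (hu : ∀ k, IsProxOn Set.univ (fun v => ρ * (K - 1) / α * ‖v‖) (u k + α⁻¹ • x k) (u (k + 1)))
    (hx : ∀ k, IsProxOn Set.univ (fun v => ρ * (K - 1) ^ 2 * ‖v‖) (-(α • u (k + 1))) (x (k + 1)))
    (hu1 : u 1 = (ρ * (K ^ 2 - K + 1) / α) • e) (hx1 : x 1 = -(ρ * K) • e) {k : ℕ} (hk : 2 ≤ k)
    (hkK : k ≤ K) : u k = (ρ * (K - 1) * (K - k) / α) • e ∧ x k = 0 := by
  induction k, hk using Nat.le_induction with
  | base =>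
    have hw : u 1 + α⁻¹ • x 1 = (ρ * (K - 1) * (K - (1 : ℕ)) / α) • e := by
      rw [hu1, hx1, smul_smul, ← add_smul]
      congr 1
      field_simp
      push_cast
      ring
    have hu1' := hu 1
    rw [hw] at hu1'
    have := iterate_succ hα hρ hkK he hu1' (hx 1)
    simpa [one_add_one_eq_two] using this
  | succ k hk ih =>
    obtain ⟨huk, hxk⟩ := ih (by omega)
    have hw : u k + α⁻¹ • x k = (ρ * (K - 1) * (K - k) / α) • e := by
      rw [huk, hxk, smul_zero, add_zero]
    have huk' := hu k
    rw [hw] at huk'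
    have := iterate_succ hα hρ hkK he huk' (hx k)
    push_cast
    exact this

theorem sum_Icc_natCast_sub (K : ℕ) : ∑ k ∈ Icc 1 K, ((K : ℝ) - k) = K * (K - 1) / 2 := by
  induction K with
  | zero => simp
  | succ K ih =>
    rw [sum_Icc_succ_top (by omega)]
    push_cast
    simp only [add_sub_right_comm _ (1 : ℝ), sum_add_distrib, ih, sum_const, Nat.card_Icc]
    push_cast
    ring

theorem sum_iterates {e : E} {x u : ℕ → E} (hα : 0 < α) (hρ : 0 ≤ ρ) (hK : 1 ≤ K)
    (he : ‖e‖ = 1) (hx0 : x 0 = (ρ * K ^ 2 / 2) • e) (hu0 : u 0 = (ρ * K ^ 2 / (2 * α)) • e)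
    (hu : ∀ k, IsProxOn Set.univ (fun v => ρ * (K - 1) / α * ‖v‖) (u k + α⁻¹ • x k) (u (k + 1)))
    (hx : ∀ k, IsProxOn Set.univ (fun v => ρ * (K - 1) ^ 2 * ‖v‖) (-(α • u (k + 1))) (x (k + 1))) :
    ∑ k ∈ Icc 1 K, x k = -(ρ * K) • e ∧
      ∑ k ∈ Icc 1 K, u k = (ρ * K / α * ((K - 1) ^ 2 / 2 + 1)) • e := by
  have hw : u 0 + α⁻¹ • x 0 = (ρ * K ^ 2 / α) • e := by
    rw [hu0, hx0, smul_smul, ← add_smul]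
    congr 1
    field_simp
    ring
  have hu0' := hu 0
  rw [hw] at hu0'
  obtain ⟨hu1, hx1⟩ := iterate_one hα hρ hK he hu0' (hx 0)
  rw [zero_add] at hu1 hx1
  have hlater := fun k (hk : k ∈ Icc 2 K) =>
    iterates_of_two_le hα hρ he hu hx hu1 hx1 (mem_Icc.1 hk).1 (mem_Icc.1 hk).2
  have hgauss := sum_Icc_natCast_sub K
  have hIcc : insert 1 (Icc 2 K) = Icc 1 K := insert_Icc_add_one_left_eq_Icc hK
  rw [← hIcc, sum_insert (by simp)] at hgauss ⊢
  rw [sum_insert (by simp)]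
  constructor
  · rw [sum_congr rfl fun k hk => (hlater k hk).2, sum_const_zero, add_zero, hx1]
  · rw [sum_congr rfl fun k hk => (hlater k hk).1, ← sum_smul, hu1, ← add_smul]
    congr 1
    have hS : ∑ k ∈ Icc 2 K, ((K : ℝ) - k) = K * (K - 1) / 2 - (K - 1) := by
      push_cast at hgauss
      linarith
    rw [← sum_div, ← mul_sum, hS]
    field_simp
    ring

theorem gap_eq {e : E} {x u : ℕ → E} (hα : 0 < α) (hρ : 0 ≤ ρ) (hK : 1 ≤ K) (he : ‖e‖ = 1)
    (hx0 : x 0 = (ρ * K ^ 2 / 2) • e) (hu0 : u 0 = (ρ * K ^ 2 / (2 * α)) • e)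
    (hu : ∀ k, IsProxOn Set.univ (fun v => α⁻¹ * (ρ * (K - 1) * ‖v‖)) (u k + α⁻¹ • x k)
      (u (k + 1)))
    (hx : ∀ k, IsProxOn Set.univ (fun v => α * (ρ * (K - 1) ^ 2 / α * ‖v‖))
      (x k - α • ((2 : ℝ) • u (k + 1) - u k) - α • (α⁻¹ • (x k + α • (u k - u (k + 1)))))
      (x (k + 1))) :
    let f := fun v : E => ρ * (K - 1) ^ 2 / α * ‖v‖
    let h := fun v : E => ‖v‖ ^ 2 / (2 * α)
    let gs := fun v : E => ρ * (K - 1) * ‖v‖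
    (f ((K : ℝ)⁻¹ • ∑ k ∈ Icc 1 K, x k) + h ((K : ℝ)⁻¹ • ∑ k ∈ Icc 1 K, x k) +
        ⟪0, (K : ℝ)⁻¹ • ∑ k ∈ Icc 1 K, x k⟫ - gs 0) -
      (f 0 + h 0 + ⟪(K : ℝ)⁻¹ • ∑ k ∈ Icc 1 K, u k, 0⟫ - gs ((K : ℝ)⁻¹ • ∑ k ∈ Icc 1 K, u k)) =
    ρ ^ 2 * K * (K ^ 2 - K + 1) / (2 * α) := by
  intro f h gs
  have hu' : ∀ k, IsProxOn Set.univ (fun v => ρ * (K - 1) / α * ‖v‖) (u k + α⁻¹ • x k)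
      (u (k + 1)) := by
    have hfun : (fun v : E => α⁻¹ * (ρ * (K - 1) * ‖v‖)) = fun v => ρ * (K - 1) / α * ‖v‖ := by
      funext v
      ring
    simpa only [hfun] using hu
  have hx' : ∀ k, IsProxOn Set.univ (fun v => ρ * (K - 1) ^ 2 * ‖v‖) (-(α • u (k + 1)))
      (x (k + 1)) := by
    have hfun :
        (fun v : E => α * (ρ * (K - 1) ^ 2 / α * ‖v‖)) = fun v => ρ * (K - 1) ^ 2 * ‖v‖ := by
      funext v
      field_simp
    simpa only [hfun, dysGf_x_step_arg_eq hα.ne'] using hx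
  obtain ⟨hsx, hsu⟩ := sum_iterates hα hρ hK he hx0 hu0 hu' hx'
  have hK0 : (K : ℝ) ≠ 0 := by positivity
  have hxbar : (K : ℝ)⁻¹ • ∑ k ∈ Icc 1 K, x k = (-ρ) • e := by
    rw [hsx, smul_smul]
    congr 1
    field_simp
  have hubar : (K : ℝ)⁻¹ • ∑ k ∈ Icc 1 K, u k = (ρ / α * ((K - 1) ^ 2 / 2 + 1)) • e := by
    rw [hsu, smul_smul]
    congr 1
    field_simp
  simp only [f, h, gs, hxbar, hubar, inner_zero_left, inner_zero_right, norm_zero, norm_smul, he,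
    Real.norm_eq_abs, abs_neg, abs_of_nonneg hρ, abs_of_nonneg (by positivity :
      0 ≤ ρ / α * ((K - 1 : ℝ) ^ 2 / 2 + 1))]
  field_simp
  ring

end DysGfBadExample

open DysGfBadExample in
/-- Bad example for DYS-gf: there are CCP `f, g`, a `(1/α)`-smooth convex `h`, and
initial/reference points with `‖x⁰−x‖² + α²‖u⁰−u‖² = 1`, such that the ergodic
primal–dual gap equals `(K²−K+1)/(αK³) > 1/(α(K+1))`. -/
theorem dys_gf_bad_example (n K : ℕ) (hn : 0 < n) (hK : 1 ≤ K) (α : ℝ) (hα : 0 < α) :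
    ∃ (Df Dg Dgs : Set (EuclideanSpace ℝ (Fin n)))
      (f g gs h : EuclideanSpace ℝ (Fin n) → ℝ)
      (gh : EuclideanSpace ℝ (Fin n) → EuclideanSpace ℝ (Fin n))
      (x0 u0 xt ut : EuclideanSpace ℝ (Fin n)),
      IsCCP Df f ∧ IsCCP Dg g ∧ IsConjugateOn Dg g Dgs gs ∧
      ConvexOn ℝ Set.univ h ∧ (∀ z, HasGradientAt h (gh z) z) ∧
      (∀ z w, ‖gh z - gh w‖ ≤ α⁻¹ * ‖z - w‖) ∧
      xt ∈ Df ∧ ut ∈ Dgs ∧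
      ‖x0 - xt‖ ^ 2 + α ^ 2 * ‖u0 - ut‖ ^ 2 = 1 ∧
      (∀ (x u : ℕ → EuclideanSpace ℝ (Fin n)), x 0 = x0 → u 0 = u0 →
        (∀ k, IsProxOn Dgs (fun v => α⁻¹ * gs v) (u k + α⁻¹ • x k) (u (k + 1))) →
        (∀ k, IsProxOn Df (fun v => α * f v)
          (x k - α • ((2 : ℝ) • u (k + 1) - u k) -
            α • gh (x k + α • (u k - u (k + 1)))) (x (k + 1))) →
        (f ((K : ℝ)⁻¹ • ∑ k ∈ Icc 1 K, x k) + h ((K : ℝ)⁻¹ • ∑ k ∈ Icc 1 K, x k) +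
            ⟪ut, (K : ℝ)⁻¹ • ∑ k ∈ Icc 1 K, x k⟫ - gs ut) -
          (f xt + h xt + ⟪(K : ℝ)⁻¹ • ∑ k ∈ Icc 1 K, u k, xt⟫ -
            gs ((K : ℝ)⁻¹ • ∑ k ∈ Icc 1 K, u k)) =
        ((K : ℝ) ^ 2 - K + 1) / (α * (K : ℝ) ^ 3)) ∧
      ((K : ℝ) ^ 2 - K + 1) / (α * (K : ℝ) ^ 3) > 1 / (α * ((K : ℝ) + 1)) := by
  have hKpos : (0 : ℝ) < K := by exact_mod_cast hK
  obtain ⟨ρ, hρ, hρK⟩ : ∃ ρ : ℝ, 0 ≤ ρ ∧ ρ ^ 2 * K ^ 4 = 2 :=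
    ⟨√2 / K ^ 2, by positivity, by rw [div_pow, Real.sq_sqrt zero_le_two]; field_simp⟩
  have hη : 0 ≤ ρ * (K - 1) := mul_nonneg hρ (by simp [hK])
  obtain ⟨e, he⟩ : ∃ e : EuclideanSpace ℝ (Fin n), ‖e‖ = 1 :=
    ⟨EuclideanSpace.single ⟨0, hn⟩ 1, by simp⟩
  refine ⟨Set.univ, Metric.closedBall 0 (ρ * (K - 1)), Set.univ,
    fun v => ρ * (K - 1) ^ 2 / α * ‖v‖, fun _ => 0, fun v => ρ * (K - 1) * ‖v‖,
    fun v => ‖v‖ ^ 2 / (2 * α), fun v => α⁻¹ • v, (ρ * K ^ 2 / 2) • e, (ρ * K ^ 2 / (2 * α)) • e,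
    0, 0, isCCP_const_mul_norm (by positivity), isCCP_zero_closedBall hη,
    isConjugateOn_zero_closedBall hη, convexOn_norm_sq_div (by positivity),
    hasGradientAt_norm_sq_div_two_mul α, norm_inv_smul_sub_inv_smul_le hα.le, trivial, trivial, ?_,
    fun x u hx0 hu0 hu hx => (gap_eq hα hρ hK he hx0 hu0 hu hx).trans ?_, ?_⟩
  · simp only [sub_zero, norm_smul, he, Real.norm_eq_abs]
    rw [abs_of_nonneg (by positivity), abs_of_nonneg (by positivity)]
    field_simp
    linear_combination 2 * hρK
  · field_simp
    linear_combination ((K : ℝ) ^ 2 - K + 1) * hρK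
  · have hcube : ((K : ℝ) ^ 2 - K + 1) * (α * (K + 1)) = α * K ^ 3 + α := by ring
    rw [gt_iff_lt, div_lt_div_iff₀ (by positivity) (by positivity), hcube]
    linarith
end
end
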